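/- For irrational x, a rational p/q is a best signed approximation of x if and only if p/q is a principal convergent p_n/q_n (n ≥ 0) or an intermediate convergent (k p_{n−1} + p_{n−2})/(k q_{n−1} + q_{n−2}) with 1 ≤ k < a_n, n ≥ 1, of the regular continued fraction of x. -/

import Mathlib

/-!
Write `P = cfP x`, `Q = cfQ x` and `t = gaussIter x (m + 1)`. As
`P m * Q (m + 1) - P (m + 1) * Q m = ±1`, every integer pair is
`(b, a) = u • (Q (m + 1), P (m + 1)) + v • (Q m, P m)`, with error
`b * x - a = (u - v * t) * (Q (m + 1) * x - P (m + 1))`. The intermediate fraction with coordinates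
`(k, 1)`, `0 ≤ k < t`, has error `(k - t) * (Q (m + 1) * x - P (m + 1))`, so a pair with `b > 0`
on the same side of `x` and with no larger error satisfies `0 < v * t - u ≤ t - k`. This forces
`(u, v) = (k, 1)` or `u ≥ k + 1, v ≥ 1`, i.e. a denominator at least that of the next fraction
`(k + 1, 1)`, so each such fraction is a best signed approximation. Conversely, if `r` is one, with
denominator `q`, pick `m` with `Q m ≤ q < Q (m + 2)` such that `Q m * x - P m` has the sign of the
error of `r`, and `k` maximal with `k * Q (m + 1) + Q m ≤ q`; comparing `r` with that fraction
shows they coincide.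
-/

/-- Iterates of the Gauss map procedure producing complete quotients of `x`:
`t₀ = x`, `tₙ₊₁ = 1/(tₙ − ⌊tₙ⌋)`. -/
noncomputable def gaussIter (x : ℝ) : ℕ → ℝ
  | 0 => x
  | n + 1 => (gaussIter x n - ⌊gaussIter x n⌋)⁻¹

/-- The partial quotients `aₙ = ⌊tₙ⌋` of the regular continued fraction of `x`. -/
noncomputable def cfA (x : ℝ) (n : ℕ) : ℤ := ⌊gaussIter x n⌋

/-- Numerators of the principal convergents, shifted by one:
`cfP x 0 = p₋₁ = 1`, `cfP x (n+1) = pₙ`. -/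
noncomputable def cfP (x : ℝ) : ℕ → ℤ
  | 0 => 1
  | 1 => ⌊x⌋
  | n + 2 => cfA x (n + 1) * cfP x (n + 1) + cfP x n

/-- Denominators of the principal convergents, shifted by one:
`cfQ x 0 = q₋₁ = 0`, `cfQ x (n+1) = qₙ`. -/
noncomputable def cfQ (x : ℝ) : ℕ → ℤ
  | 0 => 0
  | 1 => 1
  | n + 2 => cfA x (n + 1) * cfQ x (n + 1) + cfQ x n

/-- `r = p/q` is a best signed approximation of `x`. -/
def IsBestSignedApprox (x : ℝ) (r : ℚ) : Prop :=
  ∀ s : ℚ, s.den ≤ r.den → s ≠ r →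
    Real.sign ((s.den : ℝ) * x - s.num) = Real.sign ((r.den : ℝ) * x - r.num) →
    |(r.den : ℝ) * x - r.num| < |(s.den : ℝ) * x - s.num|

open Int (fract)

lemma Real.sign_eq_sign_iff_mul_pos {a b : ℝ} (ha : a ≠ 0) (hb : b ≠ 0) :
    Real.sign a = Real.sign b ↔ 0 < a * b := by
  rcases ha.lt_or_gt with ha | ha <;> rcases hb.lt_or_gt with hb | hb
  · simp [Real.sign_of_neg, ha, hb, mul_pos_of_neg_of_neg]
  · norm_num [Real.sign_of_neg ha, Real.sign_of_pos hb, lt_asymm (mul_neg_of_neg_of_pos ha hb)]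
  · norm_num [Real.sign_of_pos ha, Real.sign_of_neg hb, lt_asymm (mul_neg_of_pos_of_neg ha hb)]
  · simp [Real.sign_of_pos, ha, hb]

lemma int_cases_of_pos_mul_sub_le {t : ℝ} (ht : 0 < t) {k u v : ℤ} (hpos : 0 < v * t - u)
    (hle : v * t - u ≤ t - k) : u < 0 ∧ v ≤ 0 ∨ u = k ∧ v = 1 ∨ k + 1 ≤ u ∧ 1 ≤ v := by
  rcases le_or_gt v 0 with hv | hv
  · have : (v : ℝ) * t ≤ 0 := mul_nonpos_of_nonpos_of_nonneg (by exact_mod_cast hv) ht.le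
    exact Or.inl ⟨by exact_mod_cast (by linarith : (u : ℝ) < 0), hv⟩
  · have hv1 : (1 : ℝ) ≤ v := by exact_mod_cast hv
    have hku : (k : ℝ) + (v - 1) * t ≤ u := by linarith
    have hk : k ≤ u := by exact_mod_cast (by nlinarith : (k : ℝ) ≤ u)
    rcases hk.eq_or_lt with rfl | hk
    · have : (v : ℝ) ≤ 1 := by nlinarith
      exact Or.inr (Or.inl ⟨rfl, le_antisymm (by exact_mod_cast this) hv⟩)
    · exact Or.inr (Or.inr ⟨hk, hv⟩)

noncomputable def cfErr (x : ℝ) (n : ℕ) : ℝ := cfQ x n * x - cfP x n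

-- In the paper's indexing `semiconv x m k = (k p_m + p_{m-1}) / (k q_m + q_{m-1})`; `k = 0` gives
-- the principal convergent `p_{m-1} / q_{m-1}`.
noncomputable def semiconvNum (x : ℝ) (m : ℕ) (k : ℤ) : ℤ := k * cfP x (m + 1) + cfP x m

noncomputable def semiconvDen (x : ℝ) (m : ℕ) (k : ℤ) : ℤ := k * cfQ x (m + 1) + cfQ x m

noncomputable def semiconv (x : ℝ) (m : ℕ) (k : ℤ) : ℚ := semiconvNum x m k / semiconvDen x m k

lemma gaussIter_succ (x : ℝ) (n : ℕ) : gaussIter x (n + 1) = (fract (gaussIter x n))⁻¹ := rfl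

lemma cfP_add_two (x : ℝ) (n : ℕ) : cfP x (n + 2) = cfA x (n + 1) * cfP x (n + 1) + cfP x n := rfl

lemma cfQ_add_two (x : ℝ) (n : ℕ) : cfQ x (n + 2) = cfA x (n + 1) * cfQ x (n + 1) + cfQ x n := rfl

lemma cfP_mul_cfQ_succ_sub (x : ℝ) :
    ∀ n, cfP x n * cfQ x (n + 1) - cfP x (n + 1) * cfQ x n = (-1) ^ n
  | 0 => by simp [cfP, cfQ]
  | n + 1 => by
    rw [cfP_add_two, cfQ_add_two, pow_succ, ← cfP_mul_cfQ_succ_sub x n]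
    ring

lemma exists_cfP_cfQ_coords (x : ℝ) (m : ℕ) (a b : ℤ) : ∃ u v : ℤ,
    b = u * cfQ x (m + 1) + v * cfQ x m ∧ a = u * cfP x (m + 1) + v * cfP x m := by
  have hdet := cfP_mul_cfQ_succ_sub x m
  have hsq : ((-1 : ℤ) ^ m) * (-1) ^ m = 1 := by rw [← mul_pow]; simp
  refine ⟨(-1) ^ m * (b * cfP x m - a * cfQ x m),
    (-1) ^ m * (a * cfQ x (m + 1) - b * cfP x (m + 1)), ?_, ?_⟩
  · linear_combination (-b * (-1) ^ m) * hdet - b * hsq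
  · linear_combination (-a * (-1) ^ m) * hdet - a * hsq

lemma cfErr_zero (x : ℝ) : cfErr x 0 = -1 := by simp [cfErr, cfP, cfQ]

lemma cfErr_one (x : ℝ) : cfErr x 1 = fract x := by simp [cfErr, cfP, cfQ, ← Int.self_sub_floor]

lemma cfErr_add_two (x : ℝ) (n : ℕ) :
    cfErr x (n + 2) = cfA x (n + 1) * cfErr x (n + 1) + cfErr x n := by
  simp only [cfErr, cfP_add_two, cfQ_add_two]
  push_cast
  ring

lemma semiconvDen_add_one (x : ℝ) (m : ℕ) (k : ℤ) :
    semiconvDen x m (k + 1) = semiconvDen x m k + cfQ x (m + 1) := by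
  simp only [semiconvDen]; ring

lemma isCoprime_semiconvNum_semiconvDen (x : ℝ) (m : ℕ) (k : ℤ) :
    IsCoprime (semiconvNum x m k) (semiconvDen x m k) := by
  have hdet := cfP_mul_cfQ_succ_sub x m
  have hsq : ((-1 : ℤ) ^ m) * (-1) ^ m = 1 := by rw [← mul_pow]; simp
  refine ⟨(-1) ^ m * cfQ x (m + 1), -((-1) ^ m * cfP x (m + 1)), ?_⟩
  simp only [semiconvNum, semiconvDen]
  linear_combination (-1) ^ m * hdet + hsq

lemma semiconv_num {x : ℝ} {m : ℕ} {k : ℤ} (h : 0 < semiconvDen x m k) :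
    (semiconv x m k).num = semiconvNum x m k :=
  Rat.num_div_eq_of_coprime h
    (Int.isCoprime_iff_gcd_eq_one.1 (isCoprime_semiconvNum_semiconvDen x m k))

lemma semiconv_den {x : ℝ} {m : ℕ} {k : ℤ} (h : 0 < semiconvDen x m k) :
    ((semiconv x m k).den : ℤ) = semiconvDen x m k :=
  Rat.den_div_eq_of_coprime h
    (Int.isCoprime_iff_gcd_eq_one.1 (isCoprime_semiconvNum_semiconvDen x m k))

lemma cast_semiconv (x : ℝ) (m : ℕ) (k : ℤ) :
    (semiconv x m k : ℝ) = (semiconvNum x m k : ℝ) / (semiconvDen x m k : ℝ) := by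
  simp [semiconv]

lemma semiconv_den_mul_sub_num {x : ℝ} {m : ℕ} {k : ℤ} (h : 0 < semiconvDen x m k) :
    ((semiconv x m k).den : ℝ) * x - (semiconv x m k).num
      = (semiconvDen x m k : ℝ) * x - semiconvNum x m k := by
  rw [← semiconv_num h, ← semiconv_den h, Int.cast_natCast]

section Irrational

variable {x : ℝ}

lemma irrational_gaussIter (hx : Irrational x) : ∀ n, Irrational (gaussIter x n)
  | 0 => hx
  | n + 1 => ((irrational_gaussIter hx n).sub_intCast _).inv

lemma fract_gaussIter_pos (hx : Irrational x) (n : ℕ) : 0 < fract (gaussIter x n) :=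
  Int.fract_pos.2 ((irrational_gaussIter hx n).ne_int _)

lemma one_lt_gaussIter_succ (hx : Irrational x) (n : ℕ) : 1 < gaussIter x (n + 1) :=
  one_lt_inv_iff₀.2 ⟨fract_gaussIter_pos hx n, Int.fract_lt_one _⟩

lemma one_le_cfA_succ (hx : Irrational x) (n : ℕ) : 1 ≤ cfA x (n + 1) :=
  Int.le_floor.2 (by exact_mod_cast (one_lt_gaussIter_succ hx n).le)

lemma cast_lt_gaussIter_of_lt_cfA {n : ℕ} {k : ℤ} (h : k < cfA x n) : (k : ℝ) < gaussIter x n :=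
  (Int.cast_lt.2 h).trans_le (Int.floor_le _)

lemma cfQ_nonneg (hx : Irrational x) : ∀ n, 0 ≤ cfQ x n
  | 0 => le_rfl
  | 1 => zero_le_one
  | n + 2 => by
    rw [cfQ_add_two]
    have := one_le_cfA_succ hx n
    have := cfQ_nonneg hx n
    have := cfQ_nonneg hx (n + 1)
    positivity

lemma cfQ_monotone (hx : Irrational x) : Monotone (cfQ x) := by
  refine monotone_nat_of_le_succ fun n => ?_
  cases n with
  | zero => exact zero_le_one
  | succ n =>
    rw [cfQ_add_two]
    nlinarith [one_le_cfA_succ hx n, cfQ_nonneg hx n, cfQ_nonneg hx (n + 1)]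

lemma one_le_cfQ_succ (hx : Irrational x) (n : ℕ) : 1 ≤ cfQ x (n + 1) :=
  cfQ_monotone hx (Nat.le_add_left 1 n)

lemma le_cfQ_succ (hx : Irrational x) : ∀ n : ℕ, (n : ℤ) ≤ cfQ x (n + 1)
  | 0 => zero_le_one
  | 1 => one_le_cfQ_succ hx 1
  | n + 2 => by
    have := le_cfQ_succ hx (n + 1)
    rw [cfQ_add_two]
    push_cast at this ⊢
    nlinarith [one_le_cfA_succ hx (n + 1), one_le_cfQ_succ hx n, cfQ_nonneg hx (n + 2)]

-- This is `x = (t P (n + 1) + P n) / (t Q (n + 1) + Q n)` for the complete quotient `t`.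
lemma cfErr_eq_neg_gaussIter_mul (hx : Irrational x) :
    ∀ n, cfErr x n = -(gaussIter x (n + 1) * cfErr x (n + 1))
  | 0 => by
    have h : fract x ≠ 0 := (fract_gaussIter_pos hx 0).ne'
    rw [gaussIter_succ, cfErr_one, cfErr_zero, gaussIter, inv_mul_cancel₀ h]
  | n + 1 => by
    have ih := cfErr_eq_neg_gaussIter_mul hx n
    have hfract := (fract_gaussIter_pos hx (n + 1)).ne'
    rw [gaussIter_succ, cfErr_add_two, ih, cfA, ← Int.self_sub_floor]
    rw [← Int.self_sub_floor] at hfract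
    field_simp
    ring

lemma cfErr_ne_zero (hx : Irrational x) : ∀ n, cfErr x n ≠ 0
  | 0 => by simp [cfErr_zero]
  | n + 1 => fun h => cfErr_ne_zero hx n (by simp [cfErr_eq_neg_gaussIter_mul hx n, h])

lemma cfErr_mul_pos_or_cfErr_succ_mul_pos (hx : Irrational x) (n : ℕ) {δ : ℝ} (hδ : δ ≠ 0) :
    0 < cfErr x n * δ ∨ 0 < cfErr x (n + 1) * δ := by
  rcases (mul_ne_zero (cfErr_ne_zero hx (n + 1)) hδ).lt_or_gt with h | h
  · left
    have ht := (one_lt_gaussIter_succ hx n).trans' zero_lt_one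
    rw [cfErr_eq_neg_gaussIter_mul hx n, neg_mul, mul_assoc, neg_pos]
    exact mul_neg_of_pos_of_neg ht h
  · exact Or.inr h

lemma cast_lin_comb_sub (hx : Irrational x) (m : ℕ) (u v : ℤ) :
    ((u * cfQ x (m + 1) + v * cfQ x m : ℤ) : ℝ) * x - ((u * cfP x (m + 1) + v * cfP x m : ℤ) : ℝ)
      = (u - v * gaussIter x (m + 1)) * cfErr x (m + 1) := by
  have h := cfErr_eq_neg_gaussIter_mul hx m
  simp only [cfErr] at h ⊢
  push_cast
  linear_combination v * h

lemma semiconvDen_mul_sub_semiconvNum (hx : Irrational x) (m : ℕ) (k : ℤ) :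
    (semiconvDen x m k : ℝ) * x - semiconvNum x m k
      = (k - gaussIter x (m + 1)) * cfErr x (m + 1) := by
  simpa [semiconvDen, semiconvNum] using cast_lin_comb_sub hx m k 1

lemma semiconvDen_pos (hx : Irrational x) {m : ℕ} {k : ℤ} (hk : 0 ≤ k) (h : m ≠ 0 ∨ k ≠ 0) :
    0 < semiconvDen x m k := by
  have := one_le_cfQ_succ hx m
  have := cfQ_nonneg hx m
  rcases h with h | h
  · obtain ⟨m, rfl⟩ := Nat.exists_eq_add_one_of_ne_zero h
    have := one_le_cfQ_succ hx m
    simp only [semiconvDen]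
    nlinarith
  · simp only [semiconvDen]
    nlinarith [lt_of_le_of_ne hk h.symm]

lemma den_mul_sub_num_ne_zero (hx : Irrational x) (s : ℚ) : (s.den : ℝ) * x - s.num ≠ 0 := by
  intro h
  apply hx.ne_rat s
  rw [Rat.cast_def]
  field_simp
  linarith

lemma semiconv_eq_or_semiconvDen_succ_le (hx : Irrational x) (m : ℕ) {k : ℤ}
    (hkt : (k : ℝ) < gaussIter x (m + 1)) {a : ℤ} {b : ℕ} (hb : 0 < b)
    (hsign : 0 < (b * x - a) * (semiconvDen x m k * x - semiconvNum x m k))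
    (habs : |b * x - a| ≤ |(semiconvDen x m k : ℝ) * x - semiconvNum x m k|) :
    (b : ℤ) = semiconvDen x m k ∧ a = semiconvNum x m k ∨ semiconvDen x m (k + 1) ≤ b := by
  obtain ⟨u, v, hb_eq, ha_eq⟩ := exists_cfP_cfQ_coords x m a b
  set t := gaussIter x (m + 1)
  have hD := cfErr_ne_zero hx (m + 1)
  have hbx : (b : ℝ) * x - a = (u - v * t) * cfErr x (m + 1) := by
    rw [← cast_lin_comb_sub hx, ← hb_eq, ← ha_eq, Int.cast_natCast]
  rw [hbx, semiconvDen_mul_sub_semiconvNum hx] at hsign habs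
  have hpos : 0 < v * t - u := by
    by_contra! h
    have : (u - v * t) * (k - t) ≤ 0 := mul_nonpos_of_nonneg_of_nonpos (by linarith) (by linarith)
    nlinarith [mul_self_nonneg (cfErr x (m + 1))]
  have hle : v * t - u ≤ t - k := by
    rw [abs_mul, abs_mul] at habs
    have := le_of_mul_le_mul_right habs (abs_pos.2 hD)
    rwa [abs_sub_comm, abs_of_pos hpos, abs_sub_comm, abs_of_pos (sub_pos.2 hkt)] at this
  have hQ := one_le_cfQ_succ hx m
  have hQ' := cfQ_nonneg hx m
  rcases int_cases_of_pos_mul_sub_le (zero_lt_one.trans (one_lt_gaussIter_succ hx m)) hpos hle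
    with ⟨hu, hv⟩ | ⟨rfl, rfl⟩ | ⟨hu, hv⟩
  · have : (0 : ℤ) < b := by exact_mod_cast hb
    nlinarith
  · left
    simp only [semiconvDen, semiconvNum]
    exact ⟨by linear_combination hb_eq, by linear_combination ha_eq⟩
  · right
    simp only [semiconvDen]
    nlinarith

theorem isBestSignedApprox_semiconv {m : ℕ} {k : ℤ} (hx : Irrational x)
    (hden : 0 < semiconvDen x m k) (hkt : (k : ℝ) < gaussIter x (m + 1)) :
    IsBestSignedApprox x (semiconv x m k) := by
  intro s hs_le hs_ne hsign
  by_contra! habs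
  rw [Real.sign_eq_sign_iff_mul_pos (den_mul_sub_num_ne_zero hx s)
    (den_mul_sub_num_ne_zero hx _)] at hsign
  rw [semiconv_den_mul_sub_num hden] at hsign habs
  rcases semiconv_eq_or_semiconvDen_succ_le hx m hkt s.pos hsign habs with ⟨hd, hn⟩ | hle
  · exact hs_ne (Rat.ext (by rw [hn, semiconv_num hden])
      (by exact_mod_cast hd.trans (semiconv_den hden).symm))
  · have := semiconv_den hden
    have := semiconvDen_add_one x m k
    have := one_le_cfQ_succ hx m
    omega

lemma exists_cfQ_bracket (hx : Irrational x) {q : ℤ} (hq : 1 ≤ q) {δ : ℝ} (hδ : δ ≠ 0) :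
    ∃ m, cfQ x m ≤ q ∧ q < cfQ x (m + 2) ∧ 0 < cfErr x m * δ := by
  classical
  have hex : ∃ n, q < cfQ x (n + 2) :=
    ⟨q.toNat, by
      have : ((q.toNat + 1 : ℕ) : ℤ) ≤ cfQ x (q.toNat + 2) := le_cfQ_succ hx _
      omega⟩
  obtain ⟨n, hn⟩ : ∃ n, Nat.find hex = n := ⟨_, rfl⟩
  have hlt : q < cfQ x (n + 2) := hn ▸ Nat.find_spec hex
  have hle : cfQ x (n + 1) ≤ q := by
    cases n with
    | zero => exact hq
    | succ n => exact not_lt.1 (Nat.find_min hex (hn ▸ Nat.lt_add_one n))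
  have hmono := cfQ_monotone hx
  rcases cfErr_mul_pos_or_cfErr_succ_mul_pos hx n hδ with h | h
  · exact ⟨n, (hmono n.le_succ).trans hle, hlt, h⟩
  · exact ⟨n + 1, hle, hlt.trans_le (hmono (n + 2).le_succ), h⟩

lemma exists_semiconvDen_bracket (hx : Irrational x) {m : ℕ} {q : ℤ} (hmq : cfQ x m ≤ q)
    (hqm : q < cfQ x (m + 2)) : ∃ k, 0 ≤ k ∧ k < cfA x (m + 1) ∧
      semiconvDen x m k ≤ q ∧ q < semiconvDen x m (k + 1) := by
  have hQ := one_le_cfQ_succ hx m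
  refine ⟨(q - cfQ x m) / cfQ x (m + 1), Int.ediv_nonneg (by omega) (by omega), ?_, ?_, ?_⟩
  · rw [Int.ediv_lt_iff_lt_mul (by omega)]
    rw [cfQ_add_two] at hqm
    linarith
  · have := Int.ediv_mul_le (q - cfQ x m) (by omega : cfQ x (m + 1) ≠ 0)
    simp only [semiconvDen]
    linarith
  · have := Int.lt_ediv_add_one_mul_self (q - cfQ x m) (by omega : 0 < cfQ x (m + 1))
    simp only [semiconvDen]
    linarith

theorem exists_semiconv_eq_of_isBestSignedApprox (hx : Irrational x) {r : ℚ}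
    (hr : IsBestSignedApprox x r) :
    ∃ m k, 0 ≤ k ∧ k < cfA x (m + 1) ∧ 0 < semiconvDen x m k ∧ r = semiconv x m k := by
  set q : ℤ := (r.den : ℤ)
  have hq : 1 ≤ q := by have := r.pos; omega
  obtain ⟨m, hmq, hqm, hsign⟩ := exists_cfQ_bracket hx hq (den_mul_sub_num_ne_zero hx r)
  obtain ⟨k, hk0, hka, hk_le, hk_lt⟩ := exists_semiconvDen_bracket hx hmq hqm
  have hkt := cast_lt_gaussIter_of_lt_cfA hka
  have hden : 0 < semiconvDen x m k := by
    refine semiconvDen_pos hx hk0 (or_iff_not_imp_left.2 fun hm => ?_)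
    simp only [not_not.1 hm, semiconvDen, cfQ] at hk_lt
    omega
  refine ⟨m, k, hk0, hka, hden, ?_⟩
  have hsign' :
      0 < ((r.den : ℝ) * x - r.num) * ((semiconvDen x m k : ℝ) * x - semiconvNum x m k) := by
    rw [cfErr_eq_neg_gaussIter_mul hx m, neg_mul, mul_assoc, neg_pos] at hsign
    have hδ := neg_of_mul_neg_right hsign (zero_lt_one.trans (one_lt_gaussIter_succ hx m)).le
    rw [semiconvDen_mul_sub_semiconvNum hx, mul_comm, mul_assoc]
    exact mul_pos_of_neg_of_neg (sub_neg.2 hkt) hδ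
  have hsd := semiconv_den hden
  by_contra hne
  have hlt := hr (semiconv x m k) (by zify; omega) (Ne.symm hne)
    ((Real.sign_eq_sign_iff_mul_pos (den_mul_sub_num_ne_zero hx _) (den_mul_sub_num_ne_zero hx r)).2
      (by rw [semiconv_den_mul_sub_num hden, mul_comm]; exact hsign'))
  rw [semiconv_den_mul_sub_num hden] at hlt
  rcases semiconv_eq_or_semiconvDen_succ_le hx m hkt r.pos hsign' hlt.le with ⟨hd, hn⟩ | hle
  · exact hne (Rat.ext (hn.trans (semiconv_num hden).symm)
      (by exact_mod_cast hd.trans (semiconv_den hden).symm))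
  · omega

end Irrational

/-- Proposition 3.3: the best signed approximations of an irrational `x`
are exactly the principal and intermediate convergents of `x`. -/
theorem bestSigned_iff_principal_or_intermediate (x : ℝ) (hx : Irrational x) (r : ℚ) :
    IsBestSignedApprox x r ↔
      ((∃ n : ℕ, (r : ℝ) = (cfP x (n + 1) : ℝ) / (cfQ x (n + 1) : ℝ)) ∨
        (∃ n : ℕ, ∃ k : ℤ, 1 ≤ n ∧ 1 ≤ k ∧ k < cfA x n ∧
          (r : ℝ) = ((k * cfP x n + cfP x (n - 1) : ℤ) : ℝ) /
            ((k * cfQ x n + cfQ x (n - 1) : ℤ) : ℝ))) := by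
  constructor
  · intro hr
    obtain ⟨m, k, hk0, hka, hden, rfl⟩ := exists_semiconv_eq_of_isBestSignedApprox hx hr
    rcases hk0.eq_or_lt with rfl | hk
    · obtain ⟨n, rfl⟩ : ∃ n, m = n + 1 :=
        Nat.exists_eq_add_one_of_ne_zero (by rintro rfl; simp [semiconvDen, cfQ] at hden)
      exact Or.inl ⟨n, by simp [cast_semiconv, semiconvNum, semiconvDen]⟩
    · exact Or.inr ⟨m + 1, k, by omega, hk, hka, cast_semiconv x m k⟩
  · rintro (⟨n, hr⟩ | ⟨n, k, hn, hk, hka, hr⟩)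
    · obtain rfl : r = semiconv x (n + 1) 0 :=
        Rat.cast_injective (α := ℝ) (by simp [hr, cast_semiconv, semiconvNum, semiconvDen])
      refine isBestSignedApprox_semiconv hx (semiconvDen_pos hx le_rfl (.inl n.succ_ne_zero)) ?_
      simpa using (one_lt_gaussIter_succ hx (n + 1)).trans' zero_lt_one
    · obtain ⟨m, rfl⟩ := Nat.exists_eq_add_one_of_ne_zero (Nat.one_le_iff_ne_zero.1 hn)
      obtain rfl : r = semiconv x m k := Rat.cast_injective (hr.trans (cast_semiconv x m k).symm)
      exact isBestSignedApprox_semiconv hx (semiconvDen_pos hx (by omega) (.inr (by omega)))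
        (cast_lt_gaussIter_of_lt_cfA hka)
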